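/- arXiv:2105.11812 — 7 statements merged into one kernel-verified Lean document; each statement's English description precedes it below -/
import Mathlib

section
/- Let S be a nonempty finite type, A a nonempty finite type, 𝒫 : S × A → PMF S a transition kernel, c : S × A → ℝ a cost function, γ ∈ (0,1), and Ω : (A → ℝ) → ℝ a continuous function. For a stationary policy π : S → stdSimplex ℝ A define the regularised Bellman operator T_{π,Ω} : (S → ℝ) → (S → ℝ) by (T_{π,Ω} v)(s) = ∑_a (π s) a · (c(s,a) + γ ∑_{s'} 𝒫(s,a)(s') · v(s')) − Ω(π s), and the regularised Bellman optimality operator by (T_{*,Ω} v)(s) = inf over q ∈ stdSimplex ℝ A of [∑_a q a · (c(s,a) + γ ∑_{s'} 𝒫(s,a)(s') · v(s')) − Ω(q)]. Then: (i) each T_{π,Ω} has a unique fixed point v_{π,Ω}; (ii) T_{*,Ω} has a unique fixed point v_*; (iii) there exists a policy π* such that v_{π*,Ω} = v_* and for every policy π and every state s, v_*(s) ≤ v_{π,Ω}(s). -/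
/-!
Both Bellman operators are `γ`-contractions for the sup norm, so Banach's fixed point theorem
gives (i) and (ii). The key estimate is one-sided: if `v - w ≤ M` pointwise, then every
`q`-average of `c + γ P v` exceeds the corresponding average of `c + γ P w` by at most `γ M`; the
regulariser `Ω q` cancels. For the optimality operator, the infimum is attained by continuity of
`Ω` on the compact simplex, so comparing at the minimiser for `w` gives the same bound. A policy
that is greedy with respect to `v_*` has `v_*` as its value, and for any policy `π` the maximum
`M` of `v_* - v_π` satisfies `M ≤ γ M`, hence `M ≤ 0`.
-/

open scoped BigOperators NNReal

open Finset

/-- Regularised Bellman operator of a stationary policy `π`. -/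
noncomputable def Treg {S A : Type*} [Fintype S] [Fintype A]
    (P : S × A → PMF S) (c : S × A → ℝ) (γ : ℝ) (Ω : (A → ℝ) → ℝ)
    (π : S → stdSimplex ℝ A) (v : S → ℝ) : S → ℝ :=
  fun s =>
    (∑ a, (π s : A → ℝ) a * (c (s, a) + γ * ∑ s', (P (s, a) s').toReal * v s')) - Ω (π s)

/-- Regularised Bellman optimality operator. -/
noncomputable def TregStar {S A : Type*} [Fintype S] [Fintype A]
    (P : S × A → PMF S) (c : S × A → ℝ) (γ : ℝ) (Ω : (A → ℝ) → ℝ)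
    (v : S → ℝ) : S → ℝ :=
  fun s => ⨅ q : stdSimplex ℝ A,
    ((∑ a, (q : A → ℝ) a * (c (s, a) + γ * ∑ s', (P (s, a) s').toReal * v s')) - Ω (q : A → ℝ))

theorem sum_mul_le_of_mem_stdSimplex {𝕜 ι : Type*} [CommSemiring 𝕜] [PartialOrder 𝕜]
    [IsOrderedRing 𝕜] [Fintype ι] {q x : ι → 𝕜} (hq : q ∈ stdSimplex 𝕜 ι) {M : 𝕜}
    (hx : ∀ i, x i ≤ M) : ∑ i, q i * x i ≤ M :=
  calc ∑ i, q i * x i ≤ ∑ i, q i * M :=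
        sum_le_sum fun i _ => mul_le_mul_of_nonneg_left (hx i) (hq.1 i)
    _ = M := by rw [← sum_mul, hq.2, one_mul]

theorem PMF.toReal_mem_stdSimplex {S : Type*} [Fintype S] (p : PMF S) :
    (fun s => (p s).toReal) ∈ stdSimplex ℝ S := by
  refine ⟨fun s => ENNReal.toReal_nonneg, ?_⟩
  rw [← ENNReal.toReal_sum fun s _ => p.apply_ne_top s, ← tsum_fintype (L := .unconditional _),
    p.tsum_coe, ENNReal.toReal_one]

theorem LipschitzWith.of_sub_le {ι : Type*} [Fintype ι] {T : (ι → ℝ) → ι → ℝ} {K : ℝ≥0}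
    (h : ∀ v w M, (∀ i, v i - w i ≤ M) → ∀ i, T v i - T w i ≤ K * M) : LipschitzWith K T := by
  have hdist (v w : ι → ℝ) (i : ι) : v i - w i ≤ dist v w :=
    (le_abs_self _).trans (Real.dist_eq (v i) (w i) ▸ dist_le_pi_dist v w i)
  refine LipschitzWith.of_dist_le_mul fun v w => (dist_pi_le_iff (by positivity)).2 fun i => ?_
  rw [Real.dist_eq, abs_sub_le_iff]
  exact ⟨h v w _ (hdist v w) i, h w v _ (fun j => dist_comm v w ▸ hdist w v j) i⟩

theorem nonpos_of_forall_le_mul {ι : Type*} [Finite ι] {u : ι → ℝ} {γ : ℝ}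
    (hγ : γ < 1) (h : ∀ M, (∀ i, u i ≤ M) → ∀ i, u i ≤ γ * M) (i : ι) : u i ≤ 0 := by
  have : Nonempty ι := ⟨i⟩
  obtain ⟨j, hj⟩ := Finite.exists_max u
  have hj_le : u j ≤ γ * u j := h (u j) hj j
  nlinarith [hj i]

theorem ContractingWith.existsUnique_isFixedPt {α : Type*} [MetricSpace α] [CompleteSpace α]
    [Nonempty α] {K : ℝ≥0} {f : α → α} (hf : ContractingWith K f) : ∃! x, f x = x :=
  ⟨_, hf.fixedPoint_isFixedPt, fun _ hy => hf.fixedPoint_unique hy⟩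

section Bellman

variable {S A : Type*} [Fintype S] [Fintype A]
  (P : S × A → PMF S) (c : S × A → ℝ) (γ : ℝ) (Ω : (A → ℝ) → ℝ)

noncomputable def qValue (v : S → ℝ) (s : S) (a : A) : ℝ :=
  c (s, a) + γ * ∑ s', (P (s, a) s').toReal * v s'

/-- Definitionally, `TregStar P c γ Ω v s` is the infimum of `regObjective P c γ Ω v s` over the
simplex and `Treg P c γ Ω π v s` is its value at `π s`. -/
noncomputable def regObjective (v : S → ℝ) (s : S) (q : A → ℝ) : ℝ :=
  ∑ a, q a * qValue P c γ v s a - Ω q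

variable {Ω}

theorem continuous_regObjective (hΩ : Continuous Ω) (v : S → ℝ) (s : S) :
    Continuous (regObjective P c γ Ω v s) :=
  (continuous_finsetSum _ fun a _ => (continuous_apply a).mul continuous_const).sub hΩ

theorem exists_isMinOn_regObjective [Nonempty A] (hΩ : Continuous Ω) (v : S → ℝ) (s : S) :
    ∃ q ∈ stdSimplex ℝ A, IsMinOn (regObjective P c γ Ω v s) (stdSimplex ℝ A) q := by
  classical
  exact (isCompact_stdSimplex ℝ A).exists_isMinOn
    ⟨_, ite_eq_mem_stdSimplex ℝ (Classical.arbitrary A)⟩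
    (continuous_regObjective P c γ hΩ v s).continuousOn

theorem TregStar_le_Treg [Nonempty A] (hΩ : Continuous Ω) (π : S → stdSimplex ℝ A)
    (v : S → ℝ) : TregStar P c γ Ω v ≤ Treg P c γ Ω π v := fun s => by
  obtain ⟨q, -, hq⟩ := exists_isMinOn_regObjective P c γ hΩ v s
  exact ciInf_le
    (hq.bddBelow.mono (Set.range_subset_iff.2 fun p => Set.mem_image_of_mem _ p.2)) (π s)

theorem exists_Treg_eq_TregStar [Nonempty A] (hΩ : Continuous Ω) (v : S → ℝ) :
    ∃ π : S → stdSimplex ℝ A, Treg P c γ Ω π v = TregStar P c γ Ω v := by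
  choose q hq hmin using exists_isMinOn_regObjective P c γ hΩ v
  exact ⟨fun s => ⟨q s, hq s⟩, funext fun s => ((hmin s).iInf_eq (hq s)).symm⟩

variable {P c γ}

omit [Fintype A] in
theorem qValue_sub_le (hγ : 0 ≤ γ) {v w : S → ℝ} {M : ℝ} (h : ∀ s, v s - w s ≤ M)
    (s : S) (a : A) : qValue P c γ v s a - qValue P c γ w s a ≤ γ * M := by
  have hsum : ∑ s', (P (s, a) s').toReal * (v s' - w s') ≤ M :=
    sum_mul_le_of_mem_stdSimplex (P (s, a)).toReal_mem_stdSimplex h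
  calc qValue P c γ v s a - qValue P c γ w s a
      = γ * ∑ s', (P (s, a) s').toReal * (v s' - w s') := by
        simp only [qValue, mul_sub, sum_sub_distrib]; ring
    _ ≤ γ * M := mul_le_mul_of_nonneg_left hsum hγ

theorem regObjective_sub_le (hγ : 0 ≤ γ) {v w : S → ℝ} {M : ℝ} (h : ∀ s, v s - w s ≤ M)
    (s : S) {q : A → ℝ} (hq : q ∈ stdSimplex ℝ A) :
    regObjective P c γ Ω v s q - regObjective P c γ Ω w s q ≤ γ * M :=
  calc regObjective P c γ Ω v s q - regObjective P c γ Ω w s q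
      = ∑ a, q a * (qValue P c γ v s a - qValue P c γ w s a) := by
        simp only [regObjective, mul_sub, sum_sub_distrib]; ring
    _ ≤ γ * M := sum_mul_le_of_mem_stdSimplex hq (qValue_sub_le hγ h s)

theorem Treg_sub_le (hγ : 0 ≤ γ) (π : S → stdSimplex ℝ A) {v w : S → ℝ} {M : ℝ}
    (h : ∀ s, v s - w s ≤ M) (s : S) :
    Treg P c γ Ω π v s - Treg P c γ Ω π w s ≤ γ * M :=
  regObjective_sub_le hγ h s (π s).2

theorem TregStar_sub_le [Nonempty A] (hγ : 0 ≤ γ) (hΩ : Continuous Ω) {v w : S → ℝ} {M : ℝ}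
    (h : ∀ s, v s - w s ≤ M) (s : S) :
    TregStar P c γ Ω v s - TregStar P c γ Ω w s ≤ γ * M := by
  obtain ⟨π, hπ⟩ := exists_Treg_eq_TregStar P c γ hΩ w
  calc TregStar P c γ Ω v s - TregStar P c γ Ω w s
      ≤ Treg P c γ Ω π v s - Treg P c γ Ω π w s := by
        rw [hπ]; exact sub_le_sub_right (TregStar_le_Treg P c γ hΩ π v s) _
    _ ≤ γ * M := Treg_sub_le hγ π h s

theorem contractingWith_Treg {γ : ℝ≥0} (hγ : γ < 1) (π : S → stdSimplex ℝ A) :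
    ContractingWith γ (Treg P c γ Ω π) :=
  ⟨hγ, .of_sub_le fun _ _ _ h => Treg_sub_le γ.coe_nonneg π h⟩

theorem contractingWith_TregStar [Nonempty A] {γ : ℝ≥0} (hγ : γ < 1) (hΩ : Continuous Ω) :
    ContractingWith γ (TregStar P c γ Ω) :=
  ⟨hγ, .of_sub_le fun _ _ _ h => TregStar_sub_le γ.coe_nonneg hΩ h⟩

end Bellman

theorem stmt0_general {S A : Type*} [Fintype S] [Fintype A] [Nonempty A]
    (P : S × A → PMF S) (c : S × A → ℝ) (γ : ℝ) (hγ : γ ∈ Set.Ioo (0 : ℝ) 1)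
    (Ω : (A → ℝ) → ℝ) (hΩ : Continuous Ω) :
    -- (i) each regularised Bellman operator has a unique fixed point
    (∀ π : S → stdSimplex ℝ A, ∃! v : S → ℝ, Treg P c γ Ω π v = v) ∧
    -- (ii) the regularised Bellman optimality operator has a unique fixed point
    (∃! v : S → ℝ, TregStar P c γ Ω v = v) ∧
    -- (iii) there is an optimal policy whose value function is the optimal one,
    -- dominating the value function of every policy
    (∀ vstar : S → ℝ, TregStar P c γ Ω vstar = vstar →
      ∃ πstar : S → stdSimplex ℝ A, Treg P c γ Ω πstar vstar = vstar ∧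
        ∀ (π : S → stdSimplex ℝ A) (vπ : S → ℝ), Treg P c γ Ω π vπ = vπ →
          ∀ s, vstar s ≤ vπ s) := by
  lift γ to ℝ≥0 using hγ.1.le
  have hγ1 : γ < 1 := by exact_mod_cast hγ.2
  refine ⟨fun π => (contractingWith_Treg hγ1 π).existsUnique_isFixedPt,
    (contractingWith_TregStar hγ1 hΩ).existsUnique_isFixedPt, fun vstar hvstar => ?_⟩
  obtain ⟨πstar, hπstar⟩ := exists_Treg_eq_TregStar P c γ hΩ vstar
  refine ⟨πstar, hπstar.trans hvstar, fun π vπ hvπ s => ?_⟩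
  refine sub_nonpos.1 (nonpos_of_forall_le_mul (u := vstar - vπ) hγ1 (fun M h s => ?_) s)
  calc (vstar - vπ) s = TregStar P c γ Ω vstar s - Treg P c γ Ω π vπ s := by rw [hvstar, hvπ]; rfl
    _ ≤ Treg P c γ Ω π vstar s - Treg P c γ Ω π vπ s :=
      sub_le_sub_right (TregStar_le_Treg P c γ hΩ π vstar s) _
    _ ≤ γ * M := Treg_sub_le γ.coe_nonneg π h s

theorem stmt0 {S A : Type*} [Fintype S] [Fintype A] [Nonempty S] [Nonempty A]
    (P : S × A → PMF S) (c : S × A → ℝ) (γ : ℝ) (hγ : γ ∈ Set.Ioo (0 : ℝ) 1)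
    (Ω : (A → ℝ) → ℝ) (hΩ : Continuous Ω) :
    -- (i) each regularised Bellman operator has a unique fixed point
    (∀ π : S → stdSimplex ℝ A, ∃! v : S → ℝ, Treg P c γ Ω π v = v) ∧
    -- (ii) the regularised Bellman optimality operator has a unique fixed point
    (∃! v : S → ℝ, TregStar P c γ Ω v = v) ∧
    -- (iii) there is an optimal policy whose value function is the optimal one,
    -- dominating the value function of every policy
    (∀ vstar : S → ℝ, TregStar P c γ Ω vstar = vstar →
      ∃ πstar : S → stdSimplex ℝ A, Treg P c γ Ω πstar vstar = vstar ∧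
        ∀ (π : S → stdSimplex ℝ A) (vπ : S → ℝ), Treg P c γ Ω π vπ = vπ →
          ∀ s, vstar s ≤ vπ s) :=
  stmt0_general P c γ hγ Ω hΩ
end

section
/- Let S, A be nonempty finite types, 𝒫 : S × A → PMF S, c : S × A → ℝ, γ ∈ (0,1), and Ω : (A → ℝ) → ℝ a continuous function. With T_{π,Ω} and T_{*,Ω} the regularised Bellman operator of a policy π and the regularised Bellman optimality operator (defined by (T_{π,Ω} v)(s) = ∑_a (π s) a · (c(s,a) + γ ∑_{s'} 𝒫(s,a)(s') v(s')) − Ω(π s) and (T_{*,Ω} v)(s) = inf_{q ∈ stdSimplex ℝ A} [∑_a q a · (c(s,a) + γ ∑_{s'} 𝒫(s,a)(s') v(s')) − Ω(q)]), both operators are γ-contractions in the sup norm: for all v, w : S → ℝ, sup_s |(T_{π,Ω} v)(s) − (T_{π,Ω} w)(s)| ≤ γ · sup_s |v(s) − w(s)|, and sup_s |(T_{*,Ω} v)(s) − (T_{*,Ω} w)(s)| ≤ γ · sup_s |v(s) − w(s)|. -/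
open scoped BigOperators

/-!
Both operators differ between `v` and `w` only through the expected next-state values.
An average of `v - w` is bounded by `⨆ s, |v s - w s|`, and the discount contributes the
factor `γ`; the regulariser `Ω q` cancels for each fixed `q`. For the optimality operator,
two infima of functions at uniform distance `≤ C` are themselves at distance `≤ C`.
-/

lemma PMF.sum_toReal_eq_one {α : Type*} [Fintype α] (p : PMF α) : ∑ a, (p a).toReal = 1 := by
  rw [← ENNReal.toReal_sum fun a _ => p.apply_ne_top a, ← tsum_fintype (L := .unconditional α),
    p.tsum_coe, ENNReal.toReal_one]

lemma abs_sum_mul_sub_sum_mul_le {ι : Type*} [Fintype ι] {p x y : ι → ℝ} {M : ℝ}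
    (hp₀ : ∀ i, 0 ≤ p i) (hp₁ : ∑ i, p i = 1) (hxy : ∀ i, |x i - y i| ≤ M) :
    |∑ i, p i * x i - ∑ i, p i * y i| ≤ M :=
  calc |∑ i, p i * x i - ∑ i, p i * y i|
      = |∑ i, p i * (x i - y i)| := by simp only [mul_sub, Finset.sum_sub_distrib]
    _ ≤ ∑ i, |p i * (x i - y i)| := Finset.abs_sum_le_sum_abs _ _
    _ ≤ ∑ i, p i * M := Finset.sum_le_sum fun i _ => by
        rw [abs_mul, abs_of_nonneg (hp₀ i)]
        exact mul_le_mul_of_nonneg_left (hxy i) (hp₀ i)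
    _ = M := by rw [← Finset.sum_mul, hp₁, one_mul]

lemma Real.abs_iInf_sub_iInf_le {ι : Type*} {f g : ι → ℝ} {C : ℝ} (hC : 0 ≤ C)
    (hfg : ∀ i, |f i - g i| ≤ C) : |(⨅ i, f i) - ⨅ i, g i| ≤ C := by
  rcases isEmpty_or_nonempty ι with hι | hι
  · simpa using hC
  have hle : ∀ {f g : ι → ℝ}, BddBelow (Set.range f) → (∀ i, f i ≤ g i + C) →
      (⨅ i, f i) - C ≤ ⨅ i, g i := fun hf h =>
    le_ciInf fun i => sub_le_iff_le_add.mpr <| (ciInf_le hf i).trans (h i)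
  have hbdd : ∀ {f g : ι → ℝ}, BddBelow (Set.range f) → (∀ i, f i ≤ g i + C) →
      BddBelow (Set.range g) := fun ⟨m, hm⟩ h =>
    ⟨m - C, Set.forall_mem_range.mpr fun i =>
      sub_le_iff_le_add.mpr <| (hm (Set.mem_range_self i)).trans (h i)⟩
  have hfg' : ∀ i, f i ≤ g i + C := fun i => by linarith [abs_le.mp (hfg i)]
  have hgf : ∀ i, g i ≤ f i + C := fun i => by linarith [abs_le.mp (hfg i)]
  by_cases hf : BddBelow (Set.range f)
  · have h₁ := hle hf hfg'
    have h₂ := hle (hbdd hf hfg') hgf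
    exact abs_le.mpr ⟨by linarith, by linarith⟩
  · -- both infima are then the junk value `0`
    have hg : ¬BddBelow (Set.range g) := fun hg => hf (hbdd hg hgf)
    simpa [Real.iInf_of_not_bddBelow hf, Real.iInf_of_not_bddBelow hg] using hC

lemma abs_bellman_sum_sub_le {S A : Type*} [Fintype S] [Fintype A]
    (P : S × A → PMF S) (c : S × A → ℝ) {γ : ℝ} (hγ : 0 ≤ γ) (v w : S → ℝ)
    {q : A → ℝ} (hq : q ∈ stdSimplex ℝ A) (s : S) :
    |(∑ a, q a * (c (s, a) + γ * ∑ s', (P (s, a) s').toReal * v s'))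
      - ∑ a, q a * (c (s, a) + γ * ∑ s', (P (s, a) s').toReal * w s')|
      ≤ γ * ⨆ s, |v s - w s| := by
  have hvw : ∀ s', |v s' - w s'| ≤ ⨆ s, |v s - w s| :=
    le_ciSup (Set.finite_range _).bddAbove
  refine abs_sum_mul_sub_sum_mul_le hq.1 hq.2 fun a => ?_
  rw [add_sub_add_left_eq_sub, ← mul_sub, abs_mul, abs_of_nonneg hγ]
  exact mul_le_mul_of_nonneg_left (abs_sum_mul_sub_sum_mul_le (fun _ => ENNReal.toReal_nonneg)
    (P (s, a)).sum_toReal_eq_one hvw) hγ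

theorem stmt1_general {S A : Type*} [Fintype S] [Fintype A]
    (P : S × A → PMF S) (c : S × A → ℝ) (γ : ℝ) (hγ : γ ∈ Set.Ioo (0 : ℝ) 1)
    (Ω : (A → ℝ) → ℝ) :
    -- the regularised Bellman operator of any policy is a `γ`-contraction in sup norm
    (∀ (π : S → stdSimplex ℝ A) (v w : S → ℝ),
      (⨆ s, |Treg P c γ Ω π v s - Treg P c γ Ω π w s|) ≤ γ * ⨆ s, |v s - w s|) ∧
    -- and so is the regularised Bellman optimality operator
    (∀ v w : S → ℝ,
      (⨆ s, |TregStar P c γ Ω v s - TregStar P c γ Ω w s|) ≤ γ * ⨆ s, |v s - w s|) := by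
  have hbound : ∀ v w : S → ℝ, 0 ≤ γ * ⨆ s, |v s - w s| := fun v w =>
    mul_nonneg hγ.1.le (Real.iSup_nonneg fun _ => abs_nonneg _)
  refine ⟨fun π v w => Real.iSup_le (fun s => ?_) (hbound v w),
    fun v w => Real.iSup_le (fun s => ?_) (hbound v w)⟩
  · rw [Treg, Treg, sub_sub_sub_cancel_right]
    exact abs_bellman_sum_sub_le P c hγ.1.le v w (π s).2 s
  · refine Real.abs_iInf_sub_iInf_le (hbound v w) fun q => ?_
    rw [sub_sub_sub_cancel_right]
    exact abs_bellman_sum_sub_le P c hγ.1.le v w q.2 s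

theorem stmt1 {S A : Type*} [Fintype S] [Fintype A] [Nonempty S] [Nonempty A]
    (P : S × A → PMF S) (c : S × A → ℝ) (γ : ℝ) (hγ : γ ∈ Set.Ioo (0 : ℝ) 1)
    (Ω : (A → ℝ) → ℝ) (hΩ : Continuous Ω) :
    -- the regularised Bellman operator of any policy is a `γ`-contraction in sup norm
    (∀ (π : S → stdSimplex ℝ A) (v w : S → ℝ),
      (⨆ s, |Treg P c γ Ω π v s - Treg P c γ Ω π w s|) ≤ γ * ⨆ s, |v s - w s|) ∧
    -- and so is the regularised Bellman optimality operator
    (∀ v w : S → ℝ,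
      (⨆ s, |TregStar P c γ Ω v s - TregStar P c γ Ω w s|) ≤ γ * ⨆ s, |v s - w s|) :=
  stmt1_general P c γ hγ Ω
end

section
/- (Compactness of the set of η-weighted occupancy measures.) In the finite MDP setting with weights η : ℕ → ℝ, η(k) ≥ 0, ∑_k η(k) = 1, the set 𝒟 = { (s₀,s,a) ↦ μ_π((s,a)|s₀) : π a stationary policy } is a compact subset of the finite-dimensional space of real-valued functions on S × S × A. -/
open scoped BigOperators Classical

/-- `n`-step state–action distribution of the stationary policy `π` started at a state. -/
noncomputable def PstepS {S A : Type*} [Fintype S] [Fintype A]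
    (P : S × A → PMF S) (π : S → PMF A) : ℕ → S → S × A → ℝ
  | 0, s₀, x => if x.1 = s₀ then (π x.1 x.2).toReal else 0
  | n + 1, s₀, x => ∑ y : S × A, PstepS P π n s₀ y * (P y x.1).toReal * (π x.1 x.2).toReal

/-- `n`-step state–action distribution of `π` started at a state–action pair. -/
noncomputable def PstepSA {S A : Type*} [Fintype S] [Fintype A]
    (P : S × A → PMF S) (π : S → PMF A) : ℕ → S × A → S × A → ℝ
  | 0, y, x => if x = y then 1 else 0
  | n + 1, y, x => ∑ z : S × A, PstepSA P π n y z * (P z x.1).toReal * (π x.1 x.2).toReal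

/-- η-weighted future state distribution, started at a state. -/
noncomputable def PetaS {S A : Type*} [Fintype S] [Fintype A]
    (P : S × A → PMF S) (π : S → PMF A) (η : ℕ → ℝ) (s₀ : S) (x : S × A) : ℝ :=
  ∑' k, η k * PstepS P π k s₀ x

/-- η-weighted future state distribution, started at a state–action pair. -/
noncomputable def PetaSA {S A : Type*} [Fintype S] [Fintype A]
    (P : S × A → PMF S) (π : S → PMF A) (η : ℕ → ℝ) (y : S × A) (x : S × A) : ℝ :=
  ∑' k, η k * PstepSA P π k y x

/-- γ-discounted occupancy measure, started at a state. -/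
noncomputable def rhoS {S A : Type*} [Fintype S] [Fintype A]
    (P : S × A → PMF S) (π : S → PMF A) (γ : ℝ) (s₀ : S) (x : S × A) : ℝ :=
  ∑' t, γ ^ t * PstepS P π t s₀ x

/-- γ-discounted occupancy measure, started at a state–action pair. -/
noncomputable def rhoSA {S A : Type*} [Fintype S] [Fintype A]
    (P : S × A → PMF S) (π : S → PMF A) (γ : ℝ) (y : S × A) (x : S × A) : ℝ :=
  ∑' t, γ ^ t * PstepSA P π t y x

/-- η-weighted, γ-discounted future occupancy measure `μ_π`. -/
noncomputable def muS {S A : Type*} [Fintype S] [Fintype A]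
    (P : S × A → PMF S) (π : S → PMF A) (γ : ℝ) (η : ℕ → ℝ) (s₀ : S) (x : S × A) : ℝ :=
  ∑' t, ∑' k, γ ^ t * η k * PstepS P π (t + k) s₀ x

/-!
A policy is determined by its matrix of action probabilities, which ranges exactly over the
compact product of standard simplices. Every `n`-step distribution is a polynomial in that matrix,
bounded by `1`, so `μ_π` is a series of continuous functions dominated by the summable weights
`γ ^ t * η k`; its sum is continuous on the product of simplices, and `𝒟` is the image of a
compact set under it.
-/

namespace PMF

variable {A : Type*} [Fintype A]

lemma sum_toReal_eq_one_s9 (p : PMF A) : ∑ a, (p a).toReal = 1 := by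
  rw [← ENNReal.toReal_sum fun a _ => p.apply_ne_top a, ← tsum_fintype (L := .unconditional _),
    p.tsum_coe, ENNReal.toReal_one]

lemma range_toReal : Set.range (fun (p : PMF A) a => (p a).toReal) = stdSimplex ℝ A := by
  ext f
  constructor
  · rintro ⟨p, rfl⟩
    exact ⟨fun a => ENNReal.toReal_nonneg, p.sum_toReal_eq_one_s9⟩
  · rintro ⟨hf0, hf1⟩
    have hsum : ∑ a, ENNReal.ofReal (f a) = 1 := by
      rw [← ENNReal.ofReal_sum_of_nonneg fun a _ => hf0 a, hf1, ENNReal.ofReal_one]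
    exact ⟨ofFintype _ hsum, funext fun a => ENNReal.toReal_ofReal (hf0 a)⟩

end PMF

section StepDist

variable {S A : Type*} [Fintype S] [Fintype A] (P : S × A → PMF S)

/-- `PstepS` with the policy replaced by an arbitrary real matrix `f`, so that it can be
varied continuously. -/
noncomputable def stepDist (f : S → A → ℝ) : ℕ → S → S × A → ℝ
  | 0, s₀, x => if x.1 = s₀ then f x.1 x.2 else 0
  | n + 1, s₀, x => ∑ y : S × A, stepDist f n s₀ y * (P y x.1).toReal * f x.1 x.2

lemma PstepS_eq_stepDist (π : S → PMF A) (n : ℕ) (s₀ : S) (x : S × A) :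
    PstepS P π n s₀ x = stepDist P (fun s a => (π s a).toReal) n s₀ x := by
  induction n generalizing x with
  | zero => rfl
  | succ n ih => simp only [PstepS, stepDist, ih]

lemma stepDist_nonneg {f : S → A → ℝ} (hf : ∀ s a, 0 ≤ f s a) (n : ℕ) (s₀ : S) (x : S × A) :
    0 ≤ stepDist P f n s₀ x := by
  induction n generalizing x with
  | zero => unfold stepDist; split_ifs <;> simp [hf]
  | succ n ih =>
    exact Finset.sum_nonneg fun y _ =>
      mul_nonneg (mul_nonneg (ih y) ENNReal.toReal_nonneg) (hf _ _)

lemma sum_stepDist {f : S → A → ℝ} (hf : ∀ s, ∑ a, f s a = 1) (n : ℕ) (s₀ : S) :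
    ∑ x : S × A, stepDist P f n s₀ x = 1 := by
  induction n with
  | zero => simp [stepDist, Fintype.sum_prod_type, hf]
  | succ n ih =>
    have hstep (y : S × A) :
        ∑ x : S × A, stepDist P f n s₀ y * (P y x.1).toReal * f x.1 x.2 = stepDist P f n s₀ y := by
      simp only [Fintype.sum_prod_type, ← Finset.mul_sum, hf, mul_one, (P y).sum_toReal_eq_one_s9]
    simp only [stepDist]
    rw [Finset.sum_comm]
    simp only [hstep, ih]

lemma stepDist_le_one {f : S → A → ℝ} (hf : ∀ s, f s ∈ stdSimplex ℝ A) (n : ℕ) (s₀ : S)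
    (x : S × A) : stepDist P f n s₀ x ≤ 1 := by
  have hf0 (s : S) (a : A) : 0 ≤ f s a := (hf s).1 a
  calc stepDist P f n s₀ x ≤ ∑ y : S × A, stepDist P f n s₀ y :=
        Finset.single_le_sum (fun y _ => stepDist_nonneg P hf0 n s₀ y) (Finset.mem_univ x)
    _ = 1 := sum_stepDist P (fun s => (hf s).2) n s₀

lemma continuous_stepDist (n : ℕ) (s₀ : S) (x : S × A) :
    Continuous fun f : S → A → ℝ => stepDist P f n s₀ x := by
  induction n generalizing x with
  | zero => unfold stepDist; split_ifs <;> fun_prop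
  | succ n ih =>
    simp only [stepDist]
    fun_prop

lemma continuousOn_tsum_mul_stepDist {ι : Type*} {w : ι → ℝ} (hw : Summable fun i => |w i|)
    (m : ι → ℕ) (s₀ : S) (x : S × A) :
    ContinuousOn (fun f => ∑' i, w i * stepDist P f (m i) s₀ x)
      (Set.univ.pi fun _ => stdSimplex ℝ A) := by
  refine continuousOn_tsum (fun i => ((continuous_stepDist P _ s₀ x).const_mul _).continuousOn)
    hw fun i f hf => ?_
  have hf' : ∀ s, f s ∈ stdSimplex ℝ A := fun s => hf s (Set.mem_univ s)
  have hf0 (s : S) (a : A) : 0 ≤ f s a := (hf' s).1 a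
  rw [norm_mul, Real.norm_eq_abs, Real.norm_of_nonneg (stepDist_nonneg P hf0 _ s₀ x)]
  exact mul_le_of_le_one_right (abs_nonneg _) (stepDist_le_one P hf' _ s₀ x)

end StepDist

lemma summable_pow_mul_prod {γ : ℝ} (hγ0 : 0 ≤ γ) (hγ1 : γ < 1) {η : ℕ → ℝ}
    (hη0 : ∀ k, 0 ≤ η k) (hη : Summable η) :
    Summable fun q : ℕ × ℕ => γ ^ q.1 * η q.2 :=
  (summable_geometric_of_lt_one hγ0 hγ1).mul_of_nonneg hη (fun t => pow_nonneg hγ0 t) hη0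

lemma muS_eq_tsum_prod {S A : Type*} [Fintype S] [Fintype A] (P : S × A → PMF S)
    (π : S → PMF A) {γ : ℝ} (hγ0 : 0 ≤ γ) (hγ1 : γ < 1) {η : ℕ → ℝ} (hη0 : ∀ k, 0 ≤ η k)
    (hη : Summable η) (s₀ : S) (x : S × A) :
    muS P π γ η s₀ x = ∑' q : ℕ × ℕ,
      γ ^ q.1 * η q.2 * stepDist P (fun s a => (π s a).toReal) (q.1 + q.2) s₀ x := by
  have hπ (s : S) : (fun a => (π s a).toReal) ∈ stdSimplex ℝ A := by
    rw [← PMF.range_toReal]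
    exact Set.mem_range_self (π s)
  have hsum : Summable fun q : ℕ × ℕ =>
      γ ^ q.1 * η q.2 * stepDist P (fun s a => (π s a).toReal) (q.1 + q.2) s₀ x := by
    refine (summable_pow_mul_prod hγ0 hγ1 hη0 hη).of_nonneg_of_le (fun q => ?_) (fun q => ?_)
    · exact mul_nonneg (mul_nonneg (pow_nonneg hγ0 _) (hη0 _))
        (stepDist_nonneg P (fun s => (hπ s).1) _ _ _)
    · exact mul_le_of_le_one_right (mul_nonneg (pow_nonneg hγ0 _) (hη0 _))
        (stepDist_le_one P hπ _ _ _)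
  simp only [muS, PstepS_eq_stepDist]
  exact (hsum.tsum_prod' hsum.prod_factor).symm

theorem stmt9_general {S A : Type*} [Fintype S] [Fintype A]
    (P : S × A → PMF S) (γ : ℝ) (hγ : γ ∈ Set.Ioo (0 : ℝ) 1)
    (η : ℕ → ℝ) (hη0 : ∀ k, 0 ≤ η k) (hη1 : ∑' k, η k = 1) :
    IsCompact { F : S × S × A → ℝ |
      ∃ π : S → PMF A, F = fun p => muS P π γ η p.1 (p.2.1, p.2.2) } := by
  have hη : Summable η := by
    by_contra h
    simp [tsum_eq_zero_of_not_summable h] at hη1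
  set K : Set (S → A → ℝ) := Set.univ.pi fun _ => stdSimplex ℝ A
  set G : (S → A → ℝ) → S × S × A → ℝ := fun f p =>
    ∑' q : ℕ × ℕ, γ ^ q.1 * η q.2 * stepDist P f (q.1 + q.2) p.1 p.2
  have hK : Set.range (fun (π : S → PMF A) s a => (π s a).toReal) = K := by
    simp only [K, ← PMF.range_toReal]
    exact Set.range_piMap fun _ (p : PMF A) a => (p a).toReal
  have hD : { F : S × S × A → ℝ | ∃ π : S → PMF A, F = fun p => muS P π γ η p.1 (p.2.1, p.2.2) }
      = G '' K := by
    rw [← hK, ← Set.range_comp]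
    ext F
    simp only [Set.mem_ofPred_eq, Set.mem_range, Function.comp_def, eq_comm (a := F), G,
      muS_eq_tsum_prod P _ hγ.1.le hγ.2 hη0 hη]
  have hG : ContinuousOn G K := continuousOn_pi.2 fun p =>
    continuousOn_tsum_mul_stepDist P ((summable_pow_mul_prod hγ.1.le hγ.2 hη0 hη).abs) _ p.1 p.2
  rw [hD]
  exact (isCompact_univ_pi fun _ => isCompact_stdSimplex ℝ A).image_of_continuousOn hG

theorem stmt9 {S A : Type*} [Fintype S] [Fintype A] [Nonempty S] [Nonempty A]
    (P : S × A → PMF S) (γ : ℝ) (hγ : γ ∈ Set.Ioo (0 : ℝ) 1)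
    (η : ℕ → ℝ) (hη0 : ∀ k, 0 ≤ η k) (hη1 : ∑' k, η k = 1) :
    IsCompact { F : S × S × A → ℝ |
      ∃ π : S → PMF A, F = fun p => muS P π γ η p.1 (p.2.1, p.2.2) } :=
  stmt9_general P γ hγ η hη0 hη1
end

section
/- (Strict concavity of the conditional-entropy functional with respect to occupancy measures.) Let S and A be nonempty finite types. For a strictly positive function μ : S × A → ℝ define H̄(μ) = −∑_{(s,a)} μ(s,a) · Real.log( μ(s,a) / ∑_{a'} μ(s,a') ). Then for all strictly positive μ₁, μ₂ : S × A → ℝ and every λ ∈ (0,1): H̄(λ•μ₁ + (1−λ)•μ₂) ≥ λ·H̄(μ₁) + (1−λ)·H̄(μ₂), with equality if and only if for all s, a: μ₁(s,a)/∑_{a'} μ₁(s,a') = μ₂(s,a)/∑_{a'} μ₂(s,a'). -/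
/-!
Each summand of `Hbar` is the perspective `p * log (p / q)` of `x ↦ x * log x` at `p = μ (s, a)`,
`q = ∑ a', μ (s, a')`, and both `p` and `q` are linear in `μ`. Concavity therefore reduces
termwise to the two-term log-sum inequality
`(a + c) log ((a + c) / (b + d)) ≤ a log (a / b) + c log (c / d)`, which is strict convexity of
`x * log x` at `a / b`, `c / d` with weights `b / (b + d)`, `d / (b + d)`; equality holds exactly
when `a / b = c / d`.
-/

/-- Conditional-entropy functional of a positive measure on state–action pairs. -/
noncomputable def Hbar {S A : Type*} [Fintype S] [Fintype A] (μ : S × A → ℝ) : ℝ :=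
  -∑ x : S × A, μ x * Real.log (μ x / ∑ a' : A, μ (x.1, a'))

namespace Real

variable {a b c d : ℝ}

lemma add_mul_log_div_add_lt (ha : 0 < a) (hb : 0 < b) (hc : 0 < c) (hd : 0 < d)
    (h : a / b ≠ c / d) :
    (a + c) * log ((a + c) / (b + d)) < a * log (a / b) + c * log (c / d) := by
  have hbd : 0 < b + d := by linarith
  have hconv := strictConvexOn_mul_log.2 (Set.mem_Ici.2 (div_pos ha hb).le)
    (Set.mem_Ici.2 (div_pos hc hd).le) h (div_pos hb hbd) (div_pos hd hbd)
    (by field_simp)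
  have hmid : b / (b + d) * (a / b) + d / (b + d) * (c / d) = (a + c) / (b + d) := by
    field_simp
  simp only [smul_eq_mul, hmid] at hconv
  calc (a + c) * log ((a + c) / (b + d))
      = (b + d) * ((a + c) / (b + d) * log ((a + c) / (b + d))) := by field_simp
    _ < (b + d) * (b / (b + d) * (a / b * log (a / b)) + d / (b + d) * (c / d * log (c / d))) :=
        mul_lt_mul_of_pos_left hconv hbd
    _ = a * log (a / b) + c * log (c / d) := by field_simp

lemma add_mul_log_div_add_of_div_eq (hb : 0 < b) (hd : 0 < d) (h : a / b = c / d) :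
    (a + c) * log ((a + c) / (b + d)) = a * log (a / b) + c * log (c / d) := by
  have hmid : (a + c) / (b + d) = a / b := by
    rw [div_eq_div_iff hb.ne' hd.ne'] at h
    rw [div_eq_div_iff (by linarith) hb.ne']
    linarith
  rw [hmid, ← h]
  ring

lemma add_mul_log_div_add_le (ha : 0 < a) (hb : 0 < b) (hc : 0 < c) (hd : 0 < d) :
    (a + c) * log ((a + c) / (b + d)) ≤ a * log (a / b) + c * log (c / d) := by
  by_cases h : a / b = c / d
  · exact (add_mul_log_div_add_of_div_eq hb hd h).le
  · exact (add_mul_log_div_add_lt ha hb hc hd h).le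

lemma add_mul_log_div_add_eq_iff (ha : 0 < a) (hb : 0 < b) (hc : 0 < c) (hd : 0 < d) :
    (a + c) * log ((a + c) / (b + d)) = a * log (a / b) + c * log (c / d) ↔ a / b = c / d := by
  refine ⟨fun heq => ?_, add_mul_log_div_add_of_div_eq hb hd⟩
  by_contra h
  exact (add_mul_log_div_add_lt ha hb hc hd h).ne heq

end Real

section Hbar

variable {S A : Type*} [Fintype A]

noncomputable def HbarSummand (μ : S × A → ℝ) (x : S × A) : ℝ :=
  μ x * Real.log (μ x / ∑ a' : A, μ (x.1, a'))

lemma mul_HbarSummand {l : ℝ} (hl : l ≠ 0) (μ : S × A → ℝ) (x : S × A) :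
    l * HbarSummand μ x =
      l * μ x * Real.log (l * μ x / (l * ∑ a' : A, μ (x.1, a'))) := by
  rw [HbarSummand, mul_div_mul_left _ _ hl, mul_assoc]

lemma HbarSummand_mix (μ₁ μ₂ : S × A → ℝ) (l : ℝ) (x : S × A) :
    HbarSummand (fun x => l * μ₁ x + (1 - l) * μ₂ x) x =
      (l * μ₁ x + (1 - l) * μ₂ x) * Real.log ((l * μ₁ x + (1 - l) * μ₂ x) /
        (l * ∑ a' : A, μ₁ (x.1, a') + (1 - l) * ∑ a' : A, μ₂ (x.1, a'))) := by
  simp only [HbarSummand, Finset.sum_add_distrib, Finset.mul_sum]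

lemma HbarSummand_mix_le_and_eq_iff [Nonempty A] {μ₁ μ₂ : S × A → ℝ} {l : ℝ}
    (h₁ : ∀ x, 0 < μ₁ x) (h₂ : ∀ x, 0 < μ₂ x) (hl0 : 0 < l) (hl1 : l < 1) (x : S × A) :
    HbarSummand (fun x => l * μ₁ x + (1 - l) * μ₂ x) x ≤
        l * HbarSummand μ₁ x + (1 - l) * HbarSummand μ₂ x ∧
      (HbarSummand (fun x => l * μ₁ x + (1 - l) * μ₂ x) x =
          l * HbarSummand μ₁ x + (1 - l) * HbarSummand μ₂ x ↔
        μ₁ x / ∑ a' : A, μ₁ (x.1, a') = μ₂ x / ∑ a' : A, μ₂ (x.1, a')) := by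
  have hl1' : 0 < 1 - l := sub_pos.2 hl1
  have hsum {μ : S × A → ℝ} (h : ∀ x, 0 < μ x) : 0 < ∑ a' : A, μ (x.1, a') :=
    Finset.sum_pos (fun a _ => h (x.1, a)) Finset.univ_nonempty
  have ha := mul_pos hl0 (h₁ x)
  have hb := mul_pos hl0 (hsum h₁)
  have hc := mul_pos hl1' (h₂ x)
  have hd := mul_pos hl1' (hsum h₂)
  rw [HbarSummand_mix, mul_HbarSummand hl0.ne', mul_HbarSummand hl1'.ne']
  refine ⟨Real.add_mul_log_div_add_le ha hb hc hd, ?_⟩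
  rw [Real.add_mul_log_div_add_eq_iff ha hb hc hd, mul_div_mul_left _ _ hl0.ne',
    mul_div_mul_left _ _ hl1'.ne']

variable [Fintype S]

lemma Hbar_eq_neg_sum_HbarSummand (μ : S × A → ℝ) : Hbar μ = -∑ x, HbarSummand μ x := rfl

lemma mul_Hbar_add_mul_Hbar (μ₁ μ₂ : S × A → ℝ) (l : ℝ) :
    l * Hbar μ₁ + (1 - l) * Hbar μ₂ =
      -∑ x, (l * HbarSummand μ₁ x + (1 - l) * HbarSummand μ₂ x) := by
  simp only [Hbar_eq_neg_sum_HbarSummand, Finset.sum_add_distrib, Finset.mul_sum, mul_neg,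
    neg_add]

end Hbar

theorem stmt12_general {S A : Type*} [Fintype S] [Fintype A] [Nonempty A]
    (μ₁ μ₂ : S × A → ℝ) (h₁ : ∀ x, 0 < μ₁ x) (h₂ : ∀ x, 0 < μ₂ x)
    (l : ℝ) (hl : l ∈ Set.Ioo (0 : ℝ) 1) :
    Hbar (fun x => l * μ₁ x + (1 - l) * μ₂ x) ≥ l * Hbar μ₁ + (1 - l) * Hbar μ₂ ∧
    (Hbar (fun x => l * μ₁ x + (1 - l) * μ₂ x) = l * Hbar μ₁ + (1 - l) * Hbar μ₂ ↔
      ∀ (s : S) (a : A),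
        μ₁ (s, a) / (∑ a' : A, μ₁ (s, a')) = μ₂ (s, a) / ∑ a' : A, μ₂ (s, a')) := by
  have hterm := HbarSummand_mix_le_and_eq_iff h₁ h₂ hl.1 hl.2
  rw [mul_Hbar_add_mul_Hbar, Hbar_eq_neg_sum_HbarSummand, ge_iff_le, neg_le_neg_iff, neg_inj,
    Finset.sum_eq_sum_iff_of_le fun x _ => (hterm x).1]
  refine ⟨Finset.sum_le_sum fun x _ => (hterm x).1, ?_⟩
  simp only [Finset.mem_univ, true_implies, (hterm _).2, Prod.forall]

theorem stmt12 {S A : Type*} [Fintype S] [Fintype A] [Nonempty S] [Nonempty A]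
    (μ₁ μ₂ : S × A → ℝ) (h₁ : ∀ x, 0 < μ₁ x) (h₂ : ∀ x, 0 < μ₂ x)
    (l : ℝ) (hl : l ∈ Set.Ioo (0 : ℝ) 1) :
    Hbar (fun x => l * μ₁ x + (1 - l) * μ₂ x) ≥ l * Hbar μ₁ + (1 - l) * Hbar μ₂ ∧
    (Hbar (fun x => l * μ₁ x + (1 - l) * μ₂ x) = l * Hbar μ₁ + (1 - l) * Hbar μ₂ ↔
      ∀ (s : S) (a : A),
        μ₁ (s, a) / (∑ a' : A, μ₁ (s, a')) = μ₂ (s, a) / ∑ a' : A, μ₂ (s, a')) :=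
  stmt12_general μ₁ μ₂ h₁ h₂ l hl
end

section
/- (MEGAN change of variables: the GAN-penalised cost optimisation equals a discriminator optimisation.) Let X be a nonempty finite type and let a, b : X → ℝ be nonnegative. Define g : ℝ → ℝ on negative arguments by g(x) = −x − Real.log(1 − Real.exp x). Then the supremum over all c : X → ℝ with c(x) < 0 for all x of ∑_x [ (a(x) − b(x))·c(x) − b(x)·g(c(x)) ] equals the supremum over all D : X → ℝ with 0 < D(x) < 1 for all x of ∑_x [ a(x)·Real.log(D(x)) + b(x)·Real.log(1 − D(x)) ]. -/
/-! The substitution `D = exp ∘ c` is a bijection from negative costs onto discriminators with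
values in `(0, 1)`, and it turns the penalised cost objective into the discriminator objective
term by term, so the two sets whose suprema are compared are equal. -/

open scoped BigOperators

/-- The GAN penalty `g(x) = −x − log(1 − eˣ)` (meaningful for `x < 0`). -/
noncomputable def ganPenalty (x : ℝ) : ℝ := -x - Real.log (1 - Real.exp x)

open Real Finset

theorem sub_mul_sub_mul_ganPenalty (a b c : ℝ) :
    (a - b) * c - b * ganPenalty c = a * log (exp c) + b * log (1 - exp c) := by
  rw [ganPenalty, log_exp]
  ring

theorem stmt15_general {X : Type*} [Fintype X]
    (a b : X → ℝ) :
    sSup { r : ℝ | ∃ c : X → ℝ, (∀ x, c x < 0) ∧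
        r = ∑ x : X, ((a x - b x) * c x - b x * ganPenalty (c x)) } =
    sSup { r : ℝ | ∃ D : X → ℝ, (∀ x, 0 < D x ∧ D x < 1) ∧
        r = ∑ x : X, (a x * Real.log (D x) + b x * Real.log (1 - D x)) } := by
  congr 1
  ext r
  constructor
  · rintro ⟨c, hc, rfl⟩
    exact ⟨exp ∘ c, fun x => ⟨exp_pos _, exp_lt_one_iff.mpr (hc x)⟩,
      sum_congr rfl fun x _ => sub_mul_sub_mul_ganPenalty _ _ _⟩
  · rintro ⟨D, hD, rfl⟩
    refine ⟨log ∘ D, fun x => log_neg (hD x).1 (hD x).2, sum_congr rfl fun x _ => ?_⟩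
    rw [Function.comp_apply, sub_mul_sub_mul_ganPenalty, exp_log (hD x).1]

theorem stmt15 {X : Type*} [Fintype X] [Nonempty X]
    (a b : X → ℝ) (ha : ∀ x, 0 ≤ a x) (hb : ∀ x, 0 ≤ b x) :
    sSup { r : ℝ | ∃ c : X → ℝ, (∀ x, c x < 0) ∧
        r = ∑ x : X, ((a x - b x) * c x - b x * ganPenalty (c x)) } =
    sSup { r : ℝ | ∃ D : X → ℝ, (∀ x, 0 < D x ∧ D x < 1) ∧
        r = ∑ x : X, (a x * Real.log (D x) + b x * Real.log (1 - D x)) } :=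
  stmt15_general a b
end

section
/- (Optimal discriminator and Jensen–Shannon divergence value of the GAN objective.) Let X be a nonempty finite type and let p, q : X → ℝ be strictly positive with ∑_x p(x) = 1 and ∑_x q(x) = 1. Then the supremum over all D : X → ℝ with 0 < D(x) < 1 of ∑_x [ p(x)·Real.log(D(x)) + q(x)·Real.log(1 − D(x)) ] is attained at D*(x) = p(x)/(p(x)+q(x)) and equals 2·JSD(p,q) − Real.log 4, where JSD(p,q) = (1/2)·∑_x p(x)·Real.log( 2·p(x)/(p(x)+q(x)) ) + (1/2)·∑_x q(x)·Real.log( 2·q(x)/(p(x)+q(x)) ). -/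
/-!
At each point the objective is the concave function `D ↦ a log D + b log (1 - D)` with
`a = p x`, `b = q x`, whose maximum over `(0, 1)` is at `D = a / (a + b)`; this follows from
`log t ≤ t - 1`. Substituting the maximiser and pulling `log 2` out of each half of the JSD
with `∑ p = ∑ q = 1` gives the value `2 JSD - log 4`.
-/

open Real Finset

lemma mul_log_le_mul_log_add {a c t : ℝ} (ha : 0 ≤ a) (hc : 0 < c) (ht : 0 < t) :
    a * log t ≤ a * log c + a * (t / c - 1) := by
  have h := log_le_sub_one_of_pos (div_pos ht hc)
  rw [log_div ht.ne' hc.ne'] at h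
  nlinarith [mul_le_mul_of_nonneg_left h ha]

lemma mul_log_add_mul_log_one_sub_le {a b t : ℝ} (ha : 0 < a) (hb : 0 < b)
    (ht₀ : 0 < t) (ht₁ : t < 1) :
    a * log t + b * log (1 - t) ≤
      a * log (a / (a + b)) + b * log (b / (a + b)) := by
  have hab : 0 < a + b := add_pos ha hb
  have h₁ := mul_log_le_mul_log_add ha.le (div_pos ha hab) ht₀
  have h₂ := mul_log_le_mul_log_add hb.le (div_pos hb hab) (sub_pos.2 ht₁)
  -- the two linear error terms `t (a + b) - a` and `(1 - t)(a + b) - b` cancel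
  have hcancel : a * (t / (a / (a + b)) - 1) + b * ((1 - t) / (b / (a + b)) - 1) = 0 := by
    field_simp
    ring
  linarith

lemma one_sub_div_add {a b : ℝ} (h : a + b ≠ 0) : 1 - a / (a + b) = b / (a + b) := by
  rw [one_sub_div h, add_sub_cancel_left]

lemma sum_mul_log_const_mul {X : Type*} [Fintype X] {w r : X → ℝ} {c : ℝ}
    (hw : ∑ x, w x = 1) (hc : c ≠ 0) (hr : ∀ x, r x ≠ 0) :
    ∑ x, w x * log (c * r x) = log c + ∑ x, w x * log (r x) := by
  simp only [log_mul hc (hr _), mul_add, sum_add_distrib, ← sum_mul, hw, one_mul]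

theorem stmt16_general {X : Type*} [Fintype X]
    (p q : X → ℝ) (hp : ∀ x, 0 < p x) (hq : ∀ x, 0 < q x)
    (hp1 : ∑ x : X, p x = 1) (hq1 : ∑ x : X, q x = 1) :
    -- the optimal discriminator
    let Dstar : X → ℝ := fun x => p x / (p x + q x)
    -- the Jensen–Shannon divergence between `p` and `q`
    let JSD : ℝ :=
      (1 / 2) * ∑ x : X, p x * Real.log (2 * p x / (p x + q x)) +
      (1 / 2) * ∑ x : X, q x * Real.log (2 * q x / (p x + q x))
    -- `Dstar` is admissible and attains the supremum of the GAN objective,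
    -- whose value is `2·JSD(p,q) − log 4`
    (∀ x, 0 < Dstar x ∧ Dstar x < 1) ∧
    IsGreatest
      { r : ℝ | ∃ D : X → ℝ, (∀ x, 0 < D x ∧ D x < 1) ∧
          r = ∑ x : X, (p x * Real.log (D x) + q x * Real.log (1 - D x)) }
      (∑ x : X, (p x * Real.log (Dstar x) + q x * Real.log (1 - Dstar x))) ∧
    (∑ x : X, (p x * Real.log (Dstar x) + q x * Real.log (1 - Dstar x))) =
      2 * JSD - Real.log 4 := by
  intro Dstar JSD
  have hpq : ∀ x, 0 < p x + q x := fun x => add_pos (hp x) (hq x)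
  have hcompl : ∀ x, 1 - Dstar x = q x / (p x + q x) := fun x => one_sub_div_add (hpq x).ne'
  have hadm : ∀ x, 0 < Dstar x ∧ Dstar x < 1 := fun x =>
    ⟨div_pos (hp x) (hpq x), (div_lt_one (hpq x)).2 (lt_add_of_pos_right _ (hq x))⟩
  refine ⟨hadm, ⟨⟨Dstar, hadm, rfl⟩, ?_⟩, ?_⟩
  · rintro r ⟨D, hD, rfl⟩
    refine sum_le_sum fun x _ => ?_
    rw [hcompl x]
    exact mul_log_add_mul_log_one_sub_le (hp x) (hq x) (hD x).1 (hD x).2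
  · have hlog4 : log 4 = 2 * log 2 := by
      rw [show (4 : ℝ) = 2 ^ 2 by norm_num, log_pow, Nat.cast_ofNat]
    simp only [JSD, mul_div_assoc, hlog4,
      sum_mul_log_const_mul hp1 two_ne_zero fun x => (div_pos (hp x) (hpq x)).ne',
      sum_mul_log_const_mul hq1 two_ne_zero fun x => (div_pos (hq x) (hpq x)).ne',
      hcompl, sum_add_distrib, Dstar]
    ring

theorem stmt16 {X : Type*} [Fintype X] [Nonempty X]
    (p q : X → ℝ) (hp : ∀ x, 0 < p x) (hq : ∀ x, 0 < q x)
    (hp1 : ∑ x : X, p x = 1) (hq1 : ∑ x : X, q x = 1) :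
    -- the optimal discriminator
    let Dstar : X → ℝ := fun x => p x / (p x + q x)
    -- the Jensen–Shannon divergence between `p` and `q`
    let JSD : ℝ :=
      (1 / 2) * ∑ x : X, p x * Real.log (2 * p x / (p x + q x)) +
      (1 / 2) * ∑ x : X, q x * Real.log (2 * q x / (p x + q x))
    -- `Dstar` is admissible and attains the supremum of the GAN objective,
    -- whose value is `2·JSD(p,q) − log 4`
    (∀ x, 0 < Dstar x ∧ Dstar x < 1) ∧
    IsGreatest
      { r : ℝ | ∃ D : X → ℝ, (∀ x, 0 < D x ∧ D x < 1) ∧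
          r = ∑ x : X, (p x * Real.log (D x) + q x * Real.log (1 - D x)) }
      (∑ x : X, (p x * Real.log (Dstar x) + q x * Real.log (1 - Dstar x))) ∧
    (∑ x : X, (p x * Real.log (Dstar x) + q x * Real.log (1 - Dstar x))) =
      2 * JSD - Real.log 4 :=
  stmt16_general p q hp hq hp1 hq1
end

section
/- (Idle: (D ≡ 1/2, G = P) is a Nash equilibrium of the future-state generation game.) Let X be a nonempty finite type and let p : X → ℝ be a strictly positive probability mass function (p(x) > 0, ∑_x p(x) = 1). For D : X → ℝ with 0 < D(x) < 1 and a probability mass function G : X → ℝ (G(x) ≥ 0, ∑_x G(x) = 1), define V(D,G) = ∑_x p(x)·Real.log(D(x)) + ∑_x G(x)·Real.log(1 − D(x)). Then: (i) for every admissible D, V(D, p) ≤ V(fun _ => 1/2, p) = −Real.log 4; (ii) for every probability mass function G, V(fun _ => 1/2, G) = −Real.log 4; hence no unilateral deviation of the discriminator from D ≡ 1/2, nor of the generator from G = p, improves its objective. -/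
open scoped BigOperators

/-- The value function of the Idle future-state generation game. -/
noncomputable def idleV {X : Type*} [Fintype X] (p D G : X → ℝ) : ℝ :=
  ∑ x : X, p x * Real.log (D x) + ∑ x : X, G x * Real.log (1 - D x)

lemma Real.log_add_log_one_sub_le {d : ℝ} (hd0 : 0 < d) (hd1 : d < 1) :
    Real.log d + Real.log (1 - d) ≤ -Real.log 4 := by
  have hprod : d * (1 - d) ≤ 4⁻¹ := by nlinarith [sq_nonneg (d - 1 / 2)]
  calc Real.log d + Real.log (1 - d) = Real.log (d * (1 - d)) :=
        (Real.log_mul hd0.ne' (sub_pos.2 hd1).ne').symm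
    _ ≤ Real.log 4⁻¹ := Real.log_le_log (mul_pos hd0 (sub_pos.2 hd1)) hprod
    _ = -Real.log 4 := Real.log_inv 4

lemma idleV_half {X : Type*} [Fintype X] {p G : X → ℝ}
    (hp1 : ∑ x, p x = 1) (hG1 : ∑ x, G x = 1) :
    idleV p (fun _ => 1 / 2) G = -Real.log 4 := by
  rw [idleV, ← Finset.sum_mul, ← Finset.sum_mul, hp1, hG1,
    show (1 : ℝ) - 1 / 2 = 1 / 2 by norm_num, one_div, Real.log_inv,
    Real.log_four_eq]
  ring

lemma idleV_self_le {X : Type*} [Fintype X] {p D : X → ℝ} (hp : ∀ x, 0 ≤ p x)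
    (hD : ∀ x, 0 < D x ∧ D x < 1) :
    idleV p D p ≤ (∑ x, p x) * -Real.log 4 := by
  rw [idleV, ← Finset.sum_add_distrib, Finset.sum_mul]
  refine Finset.sum_le_sum fun x _ => ?_
  rw [← mul_add]
  exact mul_le_mul_of_nonneg_left (Real.log_add_log_one_sub_le (hD x).1 (hD x).2) (hp x)

theorem stmt17_general {X : Type*} [Fintype X]
    (p : X → ℝ) (hp : ∀ x, 0 < p x) (hp1 : ∑ x : X, p x = 1) :
    -- (i) the constant discriminator `1/2` is a best response to the generator `p`
    (∀ D : X → ℝ, (∀ x, 0 < D x ∧ D x < 1) →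
      idleV p D p ≤ idleV p (fun _ => 1 / 2) p) ∧
    idleV p (fun _ => 1 / 2) p = -Real.log 4 ∧
    -- (ii) against the constant discriminator `1/2`, every generator gets the same value
    (∀ G : X → ℝ, (∀ x, 0 ≤ G x) → ∑ x : X, G x = 1 →
      idleV p (fun _ => 1 / 2) G = -Real.log 4) := by
  refine ⟨fun D hD => ?_, idleV_half hp1 hp1, fun G _ hG1 => idleV_half hp1 hG1⟩
  calc idleV p D p ≤ (∑ x, p x) * -Real.log 4 := idleV_self_le (fun x => (hp x).le) hD
    _ = idleV p (fun _ => 1 / 2) p := by rw [hp1, one_mul, idleV_half hp1 hp1]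

theorem stmt17 {X : Type*} [Fintype X] [Nonempty X]
    (p : X → ℝ) (hp : ∀ x, 0 < p x) (hp1 : ∑ x : X, p x = 1) :
    -- (i) the constant discriminator `1/2` is a best response to the generator `p`
    (∀ D : X → ℝ, (∀ x, 0 < D x ∧ D x < 1) →
      idleV p D p ≤ idleV p (fun _ => 1 / 2) p) ∧
    idleV p (fun _ => 1 / 2) p = -Real.log 4 ∧
    -- (ii) against the constant discriminator `1/2`, every generator gets the same value
    (∀ G : X → ℝ, (∀ x, 0 ≤ G x) → ∑ x : X, G x = 1 →
      idleV p (fun _ => 1 / 2) G = -Real.log 4) :=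
  stmt17_general p hp hp1
end
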